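/- Let R be a commutative ring, P a prime ideal of R, and ∂₁,...,∂ᵣ derivations of R whose R-span is closed under Lie bracket. Define ord(f) = inf{ |I| : ∂_I(f) ∉ P } ∈ ℕ ∪ {∞}. Then for all f, g ∈ R with ord(f) = n < ∞ and ord(g) = m < ∞, one has ord(fg) = n + m. -/

import Mathlib

/-!
Write `Φ_N(h) ∈ (R/P)[t₁, …, tᵣ]` for `(∑ tᵢ ∂ᵢ)^N h` reduced modulo `P`. The coefficient of
`t^α` in `Φ_N(h)` is the sum of `∂_K h mod P` over the words `K` with letter count `α`. If
`ord h = N`, all these words give the same residue, because commuting two derivations costs a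
bracket, which lies in the span of the `∂ᵢ` and so lowers the order by only one; as `R/P` is a
domain of characteristic zero, `Φ_N(h) ≠ 0`, while `Φ_j(h) = 0` for `j < N`. The Leibniz rule for
`∑ tᵢ ∂ᵢ` then gives `Φ_{n+m}(fg) = (n+m choose n) Φ_n(f) Φ_m(g) ≠ 0`, so some word of length
`n + m` takes `fg` out of `P`, while the Leibniz rule for words shows that shorter words do not.
-/

/-- Composition of derivations along a multi-index; the empty list gives the identity. -/
def compAlong {k R : Type*} [CommRing k] [CommRing R] [Algebra k R] {ι : Type*}
    (D : ι → Derivation k R R) (I : List ι) (f : R) : R :=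
  (I.map D).foldr (fun d x => d x) f

/-- The contact order of `f` with respect to the prime ideal `P` and the family `D`. -/
noncomputable def contactOrder {k R : Type*} [CommRing k] [CommRing R] [Algebra k R]
    (P : Ideal R) {ι : Type*} (D : ι → Derivation k R R) (f : R) : ℕ∞ :=
  sInf {n : ℕ∞ | ∃ I : List ι, (I.length : ℕ∞) = n ∧ compAlong D I f ∉ P}

section Words

variable {k R ι : Type*} [CommRing k] [CommRing R] [Algebra k R] (D : ι → Derivation k R R)

@[simp] lemma compAlong_nil (f : R) : compAlong D [] f = f := rfl

@[simp] lemma compAlong_cons (i : ι) (I : List ι) (f : R) :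
    compAlong D (i :: I) f = D i (compAlong D I f) := rfl

lemma compAlong_append (I J : List ι) (f : R) :
    compAlong D (I ++ J) f = compAlong D I (compAlong D J f) := by
  induction I with
  | nil => rfl
  | cons i I ih => simp [ih]

@[simp] lemma compAlong_zero (I : List ι) : compAlong D I (0 : R) = 0 := by
  induction I with
  | nil => rfl
  | cons i I ih => simp [ih]

lemma compAlong_add (I : List ι) (f g : R) :
    compAlong D I (f + g) = compAlong D I f + compAlong D I g := by
  induction I with
  | nil => rfl
  | cons i I ih => simp [ih]

lemma compAlong_sub (I : List ι) (f g : R) :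
    compAlong D I (f - g) = compAlong D I f - compAlong D I g := by
  induction I with
  | nil => rfl
  | cons i I ih => simp [ih]

variable (P : Ideal R)

/-- `VanishesToOrder D P f n` says `n ≤ ord f`. -/
def VanishesToOrder (f : R) (n : ℕ) : Prop :=
  ∀ I : List ι, I.length < n → compAlong D I f ∈ P

variable {D P}

lemma vanishesToOrder_zero_right (f : R) : VanishesToOrder D P f 0 :=
  fun _ h => (Nat.not_lt_zero _ h).elim

lemma vanishesToOrder_zero_left (n : ℕ) : VanishesToOrder D P (0 : R) n := by
  intro I _
  simp

namespace VanishesToOrder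

variable {f g : R} {n m : ℕ}

lemma add (hf : VanishesToOrder D P f n) (hg : VanishesToOrder D P g n) :
    VanishesToOrder D P (f + g) n := fun I hI => by
  rw [compAlong_add]
  exact P.add_mem (hf I hI) (hg I hI)

lemma compAlong_of_le (hf : VanishesToOrder D P f n) (B : List ι) {s : ℕ}
    (hs : s + B.length ≤ n) : VanishesToOrder D P (compAlong D B f) s := fun V hV => by
  rw [← compAlong_append]
  exact hf _ (by simp; omega)

lemma apply (hf : VanishesToOrder D P f n) (i : ι) : VanishesToOrder D P (D i f) (n - 1) := by
  cases n with
  | zero => exact vanishesToOrder_zero_right _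
  | succ n => exact hf.compAlong_of_le [i] (by simp)

lemma mul (hf : VanishesToOrder D P f n) (hg : VanishesToOrder D P g m) :
    VanishesToOrder D P (f * g) (n + m) := by
  intro K hK
  induction K using List.reverseRecOn generalizing f g n m with
  | nil =>
    rcases Nat.eq_zero_or_pos n with rfl | hn
    · exact P.mul_mem_left f (hg [] (by simpa using hK))
    · exact P.mul_mem_right g (hf [] hn)
  | append_singleton K i ih =>
    simp only [List.length_append, List.length_singleton] at hK
    rw [compAlong_append, compAlong_cons, compAlong_nil, Derivation.leibniz, smul_eq_mul,
      smul_eq_mul, compAlong_add, mul_comm g]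
    exact P.add_mem (ih hf (hg.apply i) (by omega)) (ih (hf.apply i) hg (by omega))

lemma mul_left (hf : VanishesToOrder D P f n) (c : R) : VanishesToOrder D P (c * f) n := by
  simpa using (vanishesToOrder_zero_right c).mul hf

lemma apply_of_mem_span {d : Derivation k R R} (hd : d ∈ Submodule.span R (Set.range D))
    (hf : VanishesToOrder D P f (n + 1)) : VanishesToOrder D P (d f) n := by
  induction hd using Submodule.span_induction with
  | mem x hx =>
    obtain ⟨i, rfl⟩ := hx
    exact hf.apply i
  | zero => exact vanishesToOrder_zero_left n
  | add x y _ _ hx hy => exact hx.add hy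
  | smul c x _ hx => exact hx.mul_left c

/-- Swapping two adjacent letters changes the result by a bracket `⁅D i, D j⁆`, which lies in the
span of the `D i` and so lowers the order of vanishing by only one. -/
lemma mk_compAlong_append_eq_of_perm
    (hLie : ∀ i j, ⁅D i, D j⁆ ∈ Submodule.span R (Set.range D))
    (hf : VanishesToOrder D P f n) {B B' : List ι} (hBB' : B.Perm B') (A : List ι)
    (hlen : A.length + B.length ≤ n) :
    Ideal.Quotient.mk P (compAlong D (A ++ B) f) =
      Ideal.Quotient.mk P (compAlong D (A ++ B') f) := by
  induction hBB' generalizing A with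
  | nil => rfl
  | cons x _ ih =>
    simpa using ih (A ++ [x]) (by simp at hlen ⊢; omega)
  | swap x y l =>
    simp only [List.length_cons] at hlen
    rw [Ideal.Quotient.mk_eq_mk_iff_sub_mem, compAlong_append, compAlong_append, ← compAlong_sub,
      compAlong_cons, compAlong_cons, compAlong_cons, compAlong_cons, ← Derivation.commutator_apply]
    have hl : VanishesToOrder D P (compAlong D l f) (A.length + 1 + 1) :=
      hf.compAlong_of_le l (by omega)
    exact hl.apply_of_mem_span (hLie y x) A (by omega)
  | trans h₁ _ ih₁ ih₂ => exact (ih₁ A hlen).trans (ih₂ A (h₁.length_eq ▸ hlen))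

end VanishesToOrder

end Words

open Finset in
lemma iterate_map_mul_eq_sum_antidiagonal {A : Type*} [CommSemiring A] (L : A →+ A)
    (hL : ∀ p q, L (p * q) = L p * q + p * L q) (N : ℕ) (p q : A) :
    L^[N] (p * q) = ∑ ij ∈ antidiagonal N, N.choose ij.1 • (L^[ij.1] p * L^[ij.2] q) := by
  induction N with
  | zero => simp
  | succ N ih =>
    rw [Finset.sum_antidiagonal_choose_succ_nsmul (fun i j => L^[i] p * L^[j] q),
      Function.iterate_succ_apply', ih, map_sum, add_comm]
    simp only [map_nsmul, hL, ← Function.iterate_succ_apply' L, smul_add, Finset.sum_add_distrib]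
    congr 1
    refine Finset.sum_congr rfl fun ij hij => ?_
    rw [N.choose_symm_of_eq_add (HasAntidiagonal.mem_antidiagonal.1 hij).symm]

namespace Derivation

open MvPolynomial

variable {k R σ : Type*} [CommRing k] [CommRing R] [Algebra k R]

noncomputable def mvMapCoeffs (d : Derivation k R R) : MvPolynomial σ R →+ MvPolynomial σ R :=
  AddMonoidAlgebra.coeffAddEquiv.symm.toAddMonoidHom.comp
    ((Finsupp.mapRange.addMonoidHom (d : R →ₗ[k] R).toAddMonoidHom).comp
      AddMonoidAlgebra.coeffAddEquiv.toAddMonoidHom)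

variable (d : Derivation k R R)

@[simp] lemma coeff_mvMapCoeffs (p : MvPolynomial σ R) (α : σ →₀ ℕ) :
    coeff α (d.mvMapCoeffs p) = d (coeff α p) := rfl

lemma mvMapCoeffs_monomial (α : σ →₀ ℕ) (a : R) :
    d.mvMapCoeffs (monomial α a) = monomial α (d a) := by
  classical
  ext β
  simp only [coeff_mvMapCoeffs, coeff_monomial]
  split_ifs <;> simp

lemma mvMapCoeffs_mul (p q : MvPolynomial σ R) :
    d.mvMapCoeffs (p * q) = d.mvMapCoeffs p * q + p * d.mvMapCoeffs q := by
  classical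
  ext α
  simp only [coeff_add, coeff_mvMapCoeffs, coeff_mul, map_sum, ← Finset.sum_add_distrib,
    Derivation.leibniz, smul_eq_mul]
  refine Finset.sum_congr rfl fun x _ => ?_
  ring

end Derivation

section GenericDerivation

open MvPolynomial

variable {k R ι : Type*} [CommRing k] [CommRing R] [Algebra k R] [Fintype ι]
  (D : ι → Derivation k R R)

noncomputable def genericDerivation : MvPolynomial ι R →+ MvPolynomial ι R :=
  ∑ i, (AddMonoidHom.mulLeft (X i)).comp (D i).mvMapCoeffs

lemma genericDerivation_apply (p : MvPolynomial ι R) :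
    genericDerivation D p = ∑ i, X i * (D i).mvMapCoeffs p := by
  simp [genericDerivation]

lemma genericDerivation_mul (p q : MvPolynomial ι R) :
    genericDerivation D (p * q) = genericDerivation D p * q + p * genericDerivation D q := by
  simp only [genericDerivation_apply, Derivation.mvMapCoeffs_mul, Finset.sum_mul, Finset.mul_sum,
    ← Finset.sum_add_distrib]
  refine Finset.sum_congr rfl fun i _ => ?_
  ring

lemma genericDerivation_monomial (α : ι →₀ ℕ) (a : R) :
    genericDerivation D (monomial α a) = ∑ i, monomial (Finsupp.single i 1 + α) (D i a) := by
  simp only [genericDerivation_apply, Derivation.mvMapCoeffs_monomial, X, monomial_mul, one_mul]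

variable [DecidableEq ι]

lemma genericDerivation_iterate_C (f : R) (N : ℕ) :
    (genericDerivation D)^[N] (C f) =
      ∑ K : Fin N → ι,
        monomial (Multiset.toFinsupp (List.ofFn K)) (compAlong D (List.ofFn K) f) := by
  induction N with
  | zero => simp [← C_apply]
  | succ N ih =>
    rw [Function.iterate_succ_apply', ih, map_sum]
    simp_rw [genericDerivation_monomial]
    rw [← Fintype.sum_prod_type']
    refine Fintype.sum_equiv ((Equiv.prodComm _ _).trans (Fin.consEquiv fun _ => ι)) _ _
      fun x => ?_
    obtain ⟨K, i⟩ := x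
    simp [List.ofFn_succ, ← Multiset.cons_coe, ← Multiset.singleton_add, Multiset.toFinsupp_add]

end GenericDerivation

section ReducedGenericIterate

open MvPolynomial

variable {k R ι : Type*} [CommRing k] [CommRing R] [Algebra k R] [Fintype ι]
  (D : ι → Derivation k R R) (P : Ideal R)

/-- `(∑ i, tᵢ ∂ᵢ)^N f`, reduced modulo `P[t]`. -/
noncomputable def reducedGenericIterate (N : ℕ) (f : R) : MvPolynomial ι (R ⧸ P) :=
  map (Ideal.Quotient.mk P) ((genericDerivation D)^[N] (C f))

open Finset in
lemma reducedGenericIterate_mul (N : ℕ) (f g : R) :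
    reducedGenericIterate D P N (f * g) = ∑ ij ∈ antidiagonal N,
      N.choose ij.1 • (reducedGenericIterate D P ij.1 f * reducedGenericIterate D P ij.2 g) := by
  simp only [reducedGenericIterate,
    iterate_map_mul_eq_sum_antidiagonal _ (genericDerivation_mul D), map_sum, map_nsmul, map_mul]

variable [DecidableEq ι]

lemma reducedGenericIterate_eq_sum (N : ℕ) (f : R) :
    reducedGenericIterate D P N f = ∑ K : Fin N → ι,
      monomial (Multiset.toFinsupp (List.ofFn K))
        (Ideal.Quotient.mk P (compAlong D (List.ofFn K) f)) := by
  simp [reducedGenericIterate, genericDerivation_iterate_C, map_monomial]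

lemma exists_compAlong_notMem_of_reducedGenericIterate_ne_zero {N : ℕ} {f : R}
    (h : reducedGenericIterate D P N f ≠ 0) :
    ∃ K : List ι, K.length = N ∧ compAlong D K f ∉ P := by
  contrapose! h
  rw [reducedGenericIterate_eq_sum]
  refine Finset.sum_eq_zero fun K _ => ?_
  rw [Ideal.Quotient.eq_zero_iff_mem.2 (h _ (List.length_ofFn)), map_zero]

variable {D P}

namespace VanishesToOrder

variable {f g : R} {n m : ℕ}

lemma reducedGenericIterate_eq_zero (hf : VanishesToOrder D P f n) {N : ℕ} (hN : N < n) :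
    reducedGenericIterate D P N f = 0 := by
  rw [reducedGenericIterate_eq_sum]
  refine Finset.sum_eq_zero fun K _ => ?_
  rw [Ideal.Quotient.eq_zero_iff_mem.2 (hf _ (by simpa using hN)), map_zero]

/-- Only the term `(n, m)` of the Leibniz expansion survives. -/
lemma reducedGenericIterate_add_mul (hf : VanishesToOrder D P f n)
    (hg : VanishesToOrder D P g m) :
    reducedGenericIterate D P (n + m) (f * g) =
      (n + m).choose n • (reducedGenericIterate D P n f * reducedGenericIterate D P m g) := by
  rw [reducedGenericIterate_mul, Finset.sum_eq_single (n, m)]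
  · rintro ⟨i, j⟩ hij hne
    rw [Finset.HasAntidiagonal.mem_antidiagonal] at hij
    rcases lt_or_gt_of_ne (show i ≠ n by rintro rfl; exact hne (by simp_all)) with h | h
    · rw [hf.reducedGenericIterate_eq_zero h, zero_mul, smul_zero]
    · rw [hg.reducedGenericIterate_eq_zero (by omega), mul_zero, smul_zero]
  · simp

lemma reducedGenericIterate_ne_zero [P.IsPrime] [CharZero (R ⧸ P)]
    (hLie : ∀ i j, ⁅D i, D j⁆ ∈ Submodule.span R (Set.range D))
    (hf : VanishesToOrder D P f n) {I : List ι} (hI : I.length = n) (hfI : compAlong D I f ∉ P) :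
    reducedGenericIterate D P n f ≠ 0 := by
  subst hI
  set α : ι →₀ ℕ := Multiset.toFinsupp I
  set W := Finset.univ.filter fun K : Fin I.length → ι => Multiset.toFinsupp (List.ofFn K) = α
  have hterm : ∀ K ∈ W, Ideal.Quotient.mk P (compAlong D (List.ofFn K) f) =
      Ideal.Quotient.mk P (compAlong D I f) := by
    intro K hK
    have hperm := Multiset.coe_eq_coe.1 (Multiset.toFinsupp.injective (Finset.mem_filter.1 hK).2)
    simpa using hf.mk_compAlong_append_eq_of_perm hLie hperm [] (by simp)
  have hcoeff : coeff α (reducedGenericIterate D P I.length f) =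
      W.card • Ideal.Quotient.mk P (compAlong D I f) := by
    rw [reducedGenericIterate_eq_sum, coeff_sum]
    simp only [coeff_monomial]
    rw [← Finset.sum_filter, Finset.sum_congr rfl hterm, Finset.sum_const]
  have hW : W.card ≠ 0 :=
    Finset.card_ne_zero_of_mem (Finset.mem_filter.2 ⟨Finset.mem_univ I.get, by simp [α]⟩)
  intro h
  rw [h, coeff_zero, eq_comm, smul_eq_zero] at hcoeff
  exact hcoeff.elim hW (fun h => hfI (Ideal.Quotient.eq_zero_iff_mem.1 h))

end VanishesToOrder

end ReducedGenericIterate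

section ContactOrder

variable {k R ι : Type*} [CommRing k] [CommRing R] [Algebra k R] {D : ι → Derivation k R R}
  {P : Ideal R} {f : R} {n : ℕ}

lemma le_contactOrder_iff : (n : ℕ∞) ≤ contactOrder P D f ↔ VanishesToOrder D P f n := by
  refine ⟨fun h I hI => ?_, fun h => le_sInf ?_⟩
  · by_contra hfI
    exact absurd (h.trans (sInf_le ⟨I, rfl, hfI⟩)) (by simpa using hI)
  · rintro _ ⟨I, rfl, hfI⟩
    exact_mod_cast not_lt.1 fun hI => hfI (h I hI)

lemma contactOrder_eq_coe_iff :
    contactOrder P D f = n ↔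
      VanishesToOrder D P f n ∧ ∃ I : List ι, I.length = n ∧ compAlong D I f ∉ P := by
  rw [← le_contactOrder_iff]
  refine ⟨fun h => ⟨h.ge, ?_⟩, fun ⟨hle, I, hI, hfI⟩ =>
    le_antisymm (sInf_le ⟨I, by simp [hI], hfI⟩) hle⟩
  by_contra! hno
  have hsucc : VanishesToOrder D P f (n + 1) := fun I hI =>
    (Nat.lt_succ_iff_lt_or_eq.1 hI).elim (le_contactOrder_iff.1 h.ge I) (hno I)
  have := h ▸ le_contactOrder_iff.2 hsucc
  norm_cast at this
  omega

end ContactOrder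

/-- Multiplicativity of the contact order with respect to a prime ideal:
if `ord f = n < ∞` and `ord g = m < ∞` then `ord (fg) = n + m`. -/
theorem stmt_7 {k : Type*} [Field k] [CharZero k] {R : Type*} [CommRing R]
    [Algebra k R] (P : Ideal R) (hP : P.IsPrime) {r : ℕ}
    (D : Fin r → Derivation k R R)
    (hLie : ∀ d ∈ Submodule.span R (Set.range D), ∀ e ∈ Submodule.span R (Set.range D),
      ⁅d, e⁆ ∈ Submodule.span R (Set.range D))
    (f g : R) (n m : ℕ)
    (hf : contactOrder P D f = (n : ℕ∞)) (hg : contactOrder P D g = (m : ℕ∞)) :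
    contactOrder P D (f * g) = ((n + m : ℕ) : ℕ∞) := by
  have : CharZero (R ⧸ P) :=
    charZero_of_injective_algebraMap (algebraMap k (R ⧸ P)).injective
  have hLie' : ∀ i j, ⁅D i, D j⁆ ∈ Submodule.span R (Set.range D) := fun i j =>
    hLie _ (Submodule.subset_span ⟨i, rfl⟩) _ (Submodule.subset_span ⟨j, rfl⟩)
  obtain ⟨hfn, I, hI, hfI⟩ := contactOrder_eq_coe_iff.1 hf
  obtain ⟨hgm, J, hJ, hgJ⟩ := contactOrder_eq_coe_iff.1 hg
  have hchoose : (n + m).choose n ≠ 0 := (Nat.choose_pos (by omega)).ne'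
  have hfg : reducedGenericIterate D P (n + m) (f * g) ≠ 0 := by
    rw [hfn.reducedGenericIterate_add_mul hgm]
    exact smul_ne_zero hchoose (mul_ne_zero (hfn.reducedGenericIterate_ne_zero hLie' hI hfI)
      (hgm.reducedGenericIterate_ne_zero hLie' hJ hgJ))
  exact contactOrder_eq_coe_iff.2
    ⟨hfn.mul hgm, exists_compAlong_notMem_of_reducedGenericIterate_ne_zero D P hfg⟩
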